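/- In the rooted abstract map M = Map(𝒟, 𝒢, b) with doddering tree 𝒟 encoded by the walk ξ_𝒟, let x = F_𝒟(s) and y = F_𝒟(t) be points of 𝒟 with ξ_𝒟(t) ≥ ξ_𝒟(s). Then d_M(x̂, ŷ) ≥ ξ_𝒟(t) - ξ_𝒟(s); and if moreover y is a descendant of x in 𝒟, then d_M(x̂, ŷ) = ξ_𝒟(t) - ξ_𝒟(s). -/
import Mathlib


/-- The tree pseudometric of the doddering tree encoded by the excursion `ξ`. -/
noncomputable def treeD (ξ : ℝ → ℝ) (s t : ℝ) : ℝ :=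
  ξ s + ξ t - 2 * sInf (ξ '' Set.uIcc s t)

/-- The quotient chain pseudometric of the abstract map `Map(𝒟,𝒢,b)`, where `𝒟` is the
real tree encoded by `ξ` on `[0,1]` and `ρ` is the gluing equivalence relation (lifted to
parameters): `d_M(ŝ,t̂) = inf Σ d_𝒟(u_{2i}, u_{2i+1})` over chains in `[0,1]` joining the
class of `s` to the class of `t` whose consecutive intermediate points are glued. -/
noncomputable def mapD (ξ : ℝ → ℝ) (ρ : ℝ → ℝ → Prop) (s t : ℝ) : ℝ :=
  sInf {r | ∃ (k : ℕ) (u : ℕ → ℝ),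
    (∀ i, u i ∈ Set.Icc (0:ℝ) 1) ∧ ρ (u 0) s ∧ ρ (u (2 * k + 1)) t ∧
    (∀ i < k, ρ (u (2 * i + 1)) (u (2 * i + 2))) ∧
    r = ∑ i ∈ Finset.range (k + 1), treeD ξ (u (2 * i)) (u (2 * i + 1))}

private lemma treeD_ge (ξ : ℝ → ℝ) (hc : ContinuousOn ξ (Set.Icc 0 1))
    {a b : ℝ} (ha : a ∈ Set.Icc (0:ℝ) 1) (hb : b ∈ Set.Icc (0:ℝ) 1) :
    ξ b - ξ a ≤ treeD ξ a b := by
  have hsub : Set.uIcc a b ⊆ Set.Icc (0:ℝ) 1 := Set.uIcc_subset_Icc ha hb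
  have hcomp : IsCompact (ξ '' Set.uIcc a b) :=
    (isCompact_uIcc).image_of_continuousOn (hc.mono hsub)
  have hbd : BddBelow (ξ '' Set.uIcc a b) := hcomp.bddBelow
  have h1 : sInf (ξ '' Set.uIcc a b) ≤ ξ a := csInf_le hbd ⟨a, Set.left_mem_uIcc, rfl⟩
  have h2 : sInf (ξ '' Set.uIcc a b) ≤ ξ b := csInf_le hbd ⟨b, Set.right_mem_uIcc, rfl⟩
  unfold treeD; linarith

private lemma telescope (f : ℕ → ℝ) (k : ℕ) (h : ∀ i < k, f (2*i+1) = f (2*i+2)) :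
    ∑ i ∈ Finset.range (k+1), (f (2*i+1) - f (2*i)) = f (2*k+1) - f 0 := by
  induction k with
  | zero => simp
  | succ n ih =>
    rw [Finset.sum_range_succ, ih (fun i hi => h i (Nat.lt_succ_of_lt hi))]
    have h1 : f (2*n+1) = f (2*n+2) := h n (Nat.lt_succ_self n)
    have h2 : f (2*(n+1)) = f (2*n+2) := by norm_num [Nat.mul_succ]
    linarith

/-- In the rooted abstract map built from the doddering tree encoded by the continuous
excursion `ξ` and a gluing equivalence `ρ` that contains the tree relation of `ξ` and
only glues points of equal height, for points `x = F_𝒟(s)`, `y = F_𝒟(t)`: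
if `ξ(s) ≤ ξ(t)` then `d_M(x̂,ŷ) ≥ ξ(t) - ξ(s)`; and if moreover `y` is a descendant of
`x` in `𝒟` (i.e. `s ≤ t` and `ξ(s) = min ξ` on `[s,t]`), then
`d_M(x̂,ŷ) = ξ(t) - ξ(s)`. -/
theorem mapDist_height_bounds (ξ : ℝ → ℝ)
    (hc : ContinuousOn ξ (Set.Icc 0 1))
    (ρ : ℝ → ℝ → Prop) (hρ : Equivalence ρ)
    (htree : ∀ s t, s ∈ Set.Icc (0:ℝ) 1 → t ∈ Set.Icc (0:ℝ) 1 →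
      treeD ξ s t = 0 → ρ s t)
    (hheight : ∀ s t, s ∈ Set.Icc (0:ℝ) 1 → t ∈ Set.Icc (0:ℝ) 1 → ρ s t → ξ s = ξ t) :
    ∀ s ∈ Set.Icc (0:ℝ) 1, ∀ t ∈ Set.Icc (0:ℝ) 1,
      (ξ s ≤ ξ t → ξ t - ξ s ≤ mapD ξ ρ s t) ∧
      (s ≤ t → sInf (ξ '' Set.Icc s t) = ξ s → mapD ξ ρ s t = ξ t - ξ s) := by
  intro s hs t ht
  set S := {r | ∃ (k : ℕ) (u : ℕ → ℝ),
    (∀ i, u i ∈ Set.Icc (0:ℝ) 1) ∧ ρ (u 0) s ∧ ρ (u (2 * k + 1)) t ∧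
    (∀ i < k, ρ (u (2 * i + 1)) (u (2 * i + 2))) ∧
    r = ∑ i ∈ Finset.range (k + 1), treeD ξ (u (2 * i)) (u (2 * i + 1))} with hS
  -- the one-step chain
  have hmem : treeD ξ s t ∈ S := by
    refine ⟨0, fun i => if i = 0 then s else t, ?_, ?_, ?_, ?_, ?_⟩
    · intro i; by_cases h : i = 0 <;> simp [h, hs, ht]
    · simpa using hρ.refl s
    · simpa using hρ.refl t
    · intro i hi; omega
    · simp
  -- every element of S is ≥ ξ t - ξ s
  have hlow : ∀ r ∈ S, ξ t - ξ s ≤ r := by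
    rintro r ⟨k, u, hu, h0, h1, hg, rfl⟩
    have key : ∑ i ∈ Finset.range (k+1), (ξ (u (2*i+1)) - ξ (u (2*i)))
        ≤ ∑ i ∈ Finset.range (k+1), treeD ξ (u (2*i)) (u (2*i+1)) := by
      refine Finset.sum_le_sum fun i _ => treeD_ge ξ hc (hu _) (hu _)
    have tel : ∑ i ∈ Finset.range (k+1), (ξ (u (2*i+1)) - ξ (u (2*i)))
        = ξ (u (2*k+1)) - ξ (u 0) :=
      telescope (fun n => ξ (u n)) k (fun i hi => hheight _ _ (hu _) (hu _) (hg i hi))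
    have e0 : ξ (u 0) = ξ s := hheight _ _ (hu 0) hs h0
    have e1 : ξ (u (2*k+1)) = ξ t := hheight _ _ (hu _) ht h1
    rw [tel, e0, e1] at key
    exact key
  have hne : S.Nonempty := ⟨_, hmem⟩
  constructor
  · intro _
    exact le_csInf hne hlow
  · intro hst hinf
    have htmem : ξ t ∈ ξ '' Set.Icc s t := ⟨t, Set.right_mem_Icc.mpr hst, rfl⟩
    have hsub : Set.Icc s t ⊆ Set.Icc (0:ℝ) 1 := Set.Icc_subset_Icc hs.1 ht.2
    have hbd : BddBelow (ξ '' Set.Icc s t) :=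
      ((isCompact_Icc).image_of_continuousOn (hc.mono hsub)).bddBelow
    have hle : ξ s ≤ ξ t := hinf ▸ csInf_le hbd htmem
    have htd : treeD ξ s t = ξ t - ξ s := by
      unfold treeD
      rw [Set.uIcc_of_le hst, hinf]; ring
    have hbdS : BddBelow S := ⟨ξ t - ξ s, hlow⟩
    have h1 : mapD ξ ρ s t ≤ ξ t - ξ s := htd ▸ csInf_le hbdS hmem
    have h2 : ξ t - ξ s ≤ mapD ξ ρ s t := le_csInf hne hlow
    linarith
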